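/- Let n ≥ 2, let V₁ and V₂ be complementary complex linear subspaces of ℂⁿ, and write each z ∈ ℂⁿ uniquely as z = z' + z'' with z' ∈ V₁, z'' ∈ V₂. Let X ⊆ ℂⁿ be an unbounded subset having a unique tangent cone at infinity C_∞(X), and suppose there are reals A > 0 and B ≥ 1 such that every v ∈ C_∞(X) satisfies the strict inequality ‖v''‖ < A(1 + ‖v'‖)^B. Fix v ∈ V₁ and T₀ > 0, and let λ : [T₀, ∞) → X be any function such that the V₁-component of λ(t) equals t·v for all t ≥ T₀. Then the function t ↦ ‖λ(t) − t·v‖ / t is bounded on [T₀, ∞). -/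

import Mathlib

/-- The tangent cone at infinity of `X ⊆ ℂⁿ` with respect to a sequence `t` of
(positive) real numbers tending to `∞`: the set of `v` for which there is a sequence
`x j ∈ X` with `x j / t j → v`. -/
def tangentConeAtInftyWrt (n : ℕ) (X : Set (EuclideanSpace ℂ (Fin n))) (t : ℕ → ℝ) :
    Set (EuclideanSpace ℂ (Fin n)) :=
  {v | ∃ x : ℕ → EuclideanSpace ℂ (Fin n), (∀ j, x j ∈ X) ∧
    Filter.Tendsto (fun j => (t j)⁻¹ • x j) Filter.atTop (nhds v)}

/-!
If the ratio were unbounded, there would be points `x j = l (t j)` of `X` escaping to infinity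
much faster than their `V₁`-components `t j • v`. A limit direction `u` of `x j / ‖x j‖` then has
`π u = 0`, and rescaling by `‖x j‖ / A` puts `A • u` in the tangent cone at infinity. The cone
condition at `A • u` would read `A = ‖A • u‖ < A * (1 + 0) ^ B = A`.
-/

open Filter Topology

theorem Submodule.projection_apply_eq_of_mem {R E : Type*} [Ring R] [AddCommGroup E]
    [Module R E] {p q : Submodule R E} (h : IsCompl p q) {x y : E} (hy : y ∈ p)
    (hxy : x - y ∈ q) : p.projection q h x = y := by
  have hsplit := congrArg (p.projection q h) (add_sub_cancel y x)
  rwa [map_add, projection_apply_of_mem_left h hy, projection_apply_of_mem_right h hxy,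
    add_zero, eq_comm] at hsplit

theorem Submodule.exists_continuousLinearMap_eq_of_isCompl {𝕜 E : Type*}
    [NontriviallyNormedField 𝕜] [CompleteSpace 𝕜] [NormedAddCommGroup E] [NormedSpace 𝕜 E]
    [FiniteDimensional 𝕜 E] {p q : Submodule 𝕜 E} (h : IsCompl p q) {π : E → E}
    (hπ : ∀ z, π z ∈ p ∧ z - π z ∈ q) : ∃ P : E →L[𝕜] E, ⇑P = π :=
  ⟨(p.projection q h).toContinuousLinearMap,
    funext fun z => p.projection_apply_eq_of_mem h (hπ z).1 (hπ z).2⟩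

theorem exists_norm_eq_one_tendsto_normalize_subseq {E : Type*} [NormedAddCommGroup E]
    [NormedSpace ℝ E] [ProperSpace E] {x : ℕ → E} (hx : ∀ j, x j ≠ 0) :
    ∃ u : E, ‖u‖ = 1 ∧ ∃ φ : ℕ → ℕ, StrictMono φ ∧
      Tendsto (fun j => ‖x (φ j)‖⁻¹ • x (φ j)) atTop (𝓝 u) := by
  have hsphere : ∀ j, ‖x j‖⁻¹ • x j ∈ Metric.sphere (0 : E) 1 := fun j => by
    simpa using norm_smul_inv_norm (𝕜 := ℝ) (hx j)
  obtain ⟨u, hu, φ, hφ, hlim⟩ := (isCompact_sphere (0 : E) 1).tendsto_subseq hsphere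
  exact ⟨u, mem_sphere_zero_iff_norm.mp hu, φ, hφ, hlim⟩

theorem ContinuousLinearMap.map_eq_zero_of_tendsto_normalize {𝕜 E F : Type*}
    [NontriviallyNormedField 𝕜] [NormedAddCommGroup E] [NormedSpace 𝕜 E] [NormedSpace ℝ E]
    [NormedAddCommGroup F] [NormedSpace 𝕜 F] [NormedSpace ℝ F]
    [LinearMap.CompatibleSMul E F ℝ 𝕜] (P : E →L[𝕜] F) {x : ℕ → E} {u : E}
    (hu : Tendsto (fun j => ‖x j‖⁻¹ • x j) atTop (𝓝 u))
    (hP : Tendsto (fun j => ‖x j‖⁻¹ • P (x j)) atTop (𝓝 0)) : P u = 0 := by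
  refine tendsto_nhds_unique ((P.continuous.tendsto u).comp hu) ?_
  simpa only [Function.comp_def, P.map_smul_of_tower] using hP

theorem exists_seq_of_forall_lt_norm_sub_smul_div {E : Type*} [NormedAddCommGroup E]
    [NormedSpace ℝ E] {l : ℝ → E} {v : E} {T₀ : ℝ} (hT₀ : 0 < T₀)
    (h : ∀ M, ∃ t, T₀ ≤ t ∧ M < ‖l t - t • v‖ / t) :
    ∃ τ : ℕ → ℝ, (∀ j, T₀ ≤ τ j) ∧ (∀ j, l (τ j) ≠ 0) ∧
      Tendsto (fun j => ‖l (τ j)‖) atTop atTop ∧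
      Tendsto (fun j => τ j / ‖l (τ j)‖) atTop (𝓝 0) := by
  -- the extra `‖v‖` absorbs `‖τ j • v‖`, leaving `(j + 1) * τ j < ‖l (τ j)‖`
  choose τ hτ hlt using fun j : ℕ => h (j + 1 + ‖v‖)
  have hτpos (j : ℕ) : 0 < τ j := hT₀.trans_le (hτ j)
  have hbig (j : ℕ) : (j + 1) * τ j < ‖l (τ j)‖ := by
    have h1 := (lt_div_iff₀ (hτpos j)).1 (hlt j)
    have h2 : ‖l (τ j) - τ j • v‖ ≤ ‖l (τ j)‖ + τ j * ‖v‖ := by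
      simpa [norm_smul, abs_of_pos (hτpos j)] using norm_sub_le (l (τ j)) (τ j • v)
    nlinarith
  have hlpos (j : ℕ) : 0 < ‖l (τ j)‖ :=
    (mul_pos (by positivity) (hτpos j)).trans (hbig j)
  refine ⟨τ, hτ, fun j => norm_pos_iff.1 (hlpos j), ?_, ?_⟩
  · refine tendsto_atTop_mono (fun j => ?_)
      ((tendsto_atTop_add_const_right _ 1 tendsto_natCast_atTop_atTop).atTop_mul_const hT₀)
    calc ((j : ℝ) + 1) * T₀ ≤ (j + 1) * τ j := by gcongr; exact hτ j
      _ ≤ ‖l (τ j)‖ := (hbig j).le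
  · refine squeeze_zero (fun j => div_nonneg (hτpos j).le (hlpos j).le) (fun j => ?_)
      tendsto_one_div_add_atTop_nhds_zero_nat
    rw [div_le_div_iff₀ (hlpos j) (by positivity)]
    linarith [hbig j]

theorem smul_mem_tangentConeAtInftyWrt {n : ℕ} {X : Set (EuclideanSpace ℂ (Fin n))}
    {x : ℕ → EuclideanSpace ℂ (Fin n)} (hxX : ∀ j, x j ∈ X) {u : EuclideanSpace ℂ (Fin n)}
    (hu : Tendsto (fun j => ‖x j‖⁻¹ • x j) atTop (𝓝 u)) (r : ℝ) :
    r • u ∈ tangentConeAtInftyWrt n X (fun j => ‖x j‖ / r) := by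
  refine ⟨x, hxX, (hu.const_smul r).congr fun j => ?_⟩
  rw [inv_div, smul_smul, div_eq_mul_inv]

theorem exists_norm_eq_one_map_eq_zero_smul_mem {n : ℕ} {X C : Set (EuclideanSpace ℂ (Fin n))}
    (hC : ∀ t : ℕ → ℝ, (∀ j, 0 < t j) → Tendsto t atTop atTop →
      tangentConeAtInftyWrt n X t ⊆ C)
    (P : EuclideanSpace ℂ (Fin n) →L[ℂ] EuclideanSpace ℂ (Fin n))
    {x : ℕ → EuclideanSpace ℂ (Fin n)} (hxX : ∀ j, x j ∈ X) (hx0 : ∀ j, x j ≠ 0)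
    (hx : Tendsto (fun j => ‖x j‖) atTop atTop)
    (hP : Tendsto (fun j => ‖x j‖⁻¹ • P (x j)) atTop (𝓝 0)) {r : ℝ} (hr : 0 < r) :
    ∃ u, ‖u‖ = 1 ∧ P u = 0 ∧ r • u ∈ C := by
  obtain ⟨u, hu1, φ, hφ, hu⟩ := exists_norm_eq_one_tendsto_normalize_subseq hx0
  refine ⟨u, hu1, P.map_eq_zero_of_tendsto_normalize hu (hP.comp hφ.tendsto_atTop), ?_⟩
  exact hC _ (fun j => div_pos (norm_pos_iff.2 (hx0 _)) hr)
    ((hx.comp hφ.tendsto_atTop).atTop_div_const hr)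
    (smul_mem_tangentConeAtInftyWrt (fun j => hxX _) hu r)

theorem statement5_general (n : ℕ)
    (V₁ V₂ : Submodule ℂ (EuclideanSpace ℂ (Fin n))) (hcompl : IsCompl V₁ V₂)
    (π : EuclideanSpace ℂ (Fin n) → EuclideanSpace ℂ (Fin n))
    (hπ : ∀ z, π z ∈ V₁ ∧ z - π z ∈ V₂)
    (X : Set (EuclideanSpace ℂ (Fin n)))
    (C : Set (EuclideanSpace ℂ (Fin n)))
    (hC : ∀ t : ℕ → ℝ, (∀ j, 0 < t j) → Filter.Tendsto t Filter.atTop Filter.atTop →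
        tangentConeAtInftyWrt n X t = C)
    (A B : ℝ) (hA : 0 < A)
    (hcone : ∀ v ∈ C, ‖v - π v‖ < A * (1 + ‖π v‖) ^ B)
    (v : EuclideanSpace ℂ (Fin n))
    (T₀ : ℝ) (hT₀ : 0 < T₀)
    (l : ℝ → EuclideanSpace ℂ (Fin n))
    (hlX : ∀ t : ℝ, T₀ ≤ t → l t ∈ X)
    (hlπ : ∀ t : ℝ, T₀ ≤ t → π (l t) = t • v) :
    ∃ M : ℝ, ∀ t : ℝ, T₀ ≤ t → ‖l t - t • v‖ / t ≤ M := by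
  obtain ⟨P, rfl⟩ := Submodule.exists_continuousLinearMap_eq_of_isCompl hcompl hπ
  by_contra! hM
  obtain ⟨τ, hτ, hl0, hltop, hratio⟩ := exists_seq_of_forall_lt_norm_sub_smul_div hT₀ hM
  have hP : Tendsto (fun j => ‖l (τ j)‖⁻¹ • P (l (τ j))) atTop (𝓝 0) := by
    have hlim := hratio.smul_const v
    rw [zero_smul] at hlim
    refine hlim.congr fun j => ?_
    rw [hlπ _ (hτ j), smul_smul, div_eq_inv_mul]
  obtain ⟨u, hu1, hPu, hAu⟩ := exists_norm_eq_one_map_eq_zero_smul_mem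
    (fun t ht ht' => (hC t ht ht').le) P (fun j => hlX _ (hτ j)) hl0 hltop hP hA
  have hbound := hcone _ hAu
  rw [P.map_smul_of_tower, hPu, smul_zero, sub_zero, norm_zero, add_zero, Real.one_rpow, mul_one,
    norm_smul, Real.norm_of_nonneg hA.le, hu1, mul_one] at hbound
  exact lt_irrefl A hbound

/-- Let `V₁, V₂` be complementary complex linear subspaces of `ℂⁿ`,
with projection `π : z ↦ z'` onto `V₁` along `V₂`.  Let `X ⊆ ℂⁿ` be an unbounded set
with a unique tangent cone at infinity `C`, and suppose `A > 0`, `B ≥ 1` are such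
that every `v ∈ C` satisfies `‖v - π v‖ < A(1 + ‖π v‖)^B`.  Fix `v ∈ V₁`, `T₀ > 0`,
and let `l : [T₀, ∞) → X` be any function whose `V₁`-component is `π (l t) = t • v`.
Then `t ↦ ‖l t - t • v‖ / t` is bounded on `[T₀, ∞)`. -/
theorem statement5 (n : ℕ) (hn : 2 ≤ n)
    (V₁ V₂ : Submodule ℂ (EuclideanSpace ℂ (Fin n))) (hcompl : IsCompl V₁ V₂)
    (π : EuclideanSpace ℂ (Fin n) → EuclideanSpace ℂ (Fin n))
    (hπ : ∀ z, π z ∈ V₁ ∧ z - π z ∈ V₂)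
    (X : Set (EuclideanSpace ℂ (Fin n))) (hX : ¬ Bornology.IsBounded X)
    (C : Set (EuclideanSpace ℂ (Fin n)))
    (hC : ∀ t : ℕ → ℝ, (∀ j, 0 < t j) → Filter.Tendsto t Filter.atTop Filter.atTop →
        tangentConeAtInftyWrt n X t = C)
    (A B : ℝ) (hA : 0 < A) (hB : 1 ≤ B)
    (hcone : ∀ v ∈ C, ‖v - π v‖ < A * (1 + ‖π v‖) ^ B)
    (v : EuclideanSpace ℂ (Fin n)) (hv : v ∈ V₁)
    (T₀ : ℝ) (hT₀ : 0 < T₀)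
    (l : ℝ → EuclideanSpace ℂ (Fin n))
    (hlX : ∀ t : ℝ, T₀ ≤ t → l t ∈ X)
    (hlπ : ∀ t : ℝ, T₀ ≤ t → π (l t) = t • v) :
    ∃ M : ℝ, ∀ t : ℝ, T₀ ≤ t → ‖l t - t • v‖ / t ≤ M :=
  statement5_general n V₁ V₂ hcompl π hπ X C hC A B hA hcone v T₀ hT₀ l hlX hlπ
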